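/- arXiv:1304.0586 — 6 statements merged into one kernel-verified Lean document; each statement's English description precedes it below -/
import Mathlib

section
/- Let m, n ≥ 1, let G be the subgroup of bijections of ℤ × {1,...,2n} generated by φ = ρ ∘ τ^m (where ρ(k,i) = (k+i-n, 2n+1-i) and τ(k,i) = (k-1,i)), and let ν = ρ ∘ τ^{1-n}. Then ν ∈ G if and only if (2m-1) divides (2n-1). -/
/-!
Since `ρ² (k, i) = (k + 1, i)`, we have `τ = ρ⁻²`, so every `ρ ∘ τ^a` is the power `ρ^(1 - 2a)`;
in particular `ν = ρ^(2n - 1)` and `φ = ρ^(1 - 2m)`. The shift `τ` has infinite order, hence so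
does `ρ`, and in an infinite cyclic group `ρ^u ∈ ⟨ρ^v⟩` exactly when `v ∣ u`.
-/

open Equiv Subgroup

theorem not_isOfFinOrder_of_apply_eq_sub_one {α : Type*} [Nonempty α] (f : α → ℤ)
    (σ : Perm α) (hσ : ∀ p, f (σ p) = f p - 1) : ¬IsOfFinOrder σ := by
  have hpow : ∀ (k : ℕ) p, f ((σ ^ k) p) = f p - k := by
    intro k
    induction k with
    | zero => simp
    | succ k ih => intro p; rw [pow_succ, Perm.mul_apply, ih, hσ]; push_cast; ring
  rw [isOfFinOrder_iff_pow_eq_one]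
  rintro ⟨k, hk, hσk⟩
  obtain ⟨p⟩ := ‹Nonempty α›
  have := hpow k p
  rw [hσk, Perm.one_apply] at this
  omega

theorem zpow_mem_zpowers_zpow_iff {G : Type*} [Group G] {g : G} (hg : ¬IsOfFinOrder g)
    {a b : ℤ} : g ^ a ∈ zpowers (g ^ b) ↔ b ∣ a := by
  simp only [mem_zpowers_iff, ← zpow_mul, (injective_zpow_iff_not_isOfFinOrder.2 hg).eq_iff,
    dvd_def, eq_comm]

theorem mul_zpow_eq_zpow_of_sq_mul_eq_one {G : Type*} [Group G] {g t : G} (h : g ^ 2 * t = 1)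
    (a : ℤ) : g * t ^ a = g ^ (1 - 2 * a) := by
  rw [eq_inv_of_mul_eq_one_right h]
  group

theorem mesh_rho_sq_mul_tau_eq_one {N : ℤ} {s : Set ℤ} (ρ τ : Perm (ℤ × s))
    (hρ : ∀ p, (ρ p).1 = p.1 + (p.2 : ℤ) - N ∧ ((ρ p).2 : ℤ) = 2 * N + 1 - (p.2 : ℤ))
    (hτ : ∀ p, (τ p).1 = p.1 - 1 ∧ ((τ p).2 : ℤ) = (p.2 : ℤ)) :
    ρ ^ 2 * τ = 1 := by
  ext p
  · simp only [pow_two, Perm.mul_apply, Perm.one_apply, (hρ _).1, (hρ _).2, (hτ _).1, (hτ _).2]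
    ring
  · simp only [pow_two, Perm.mul_apply, Perm.one_apply, (hρ _).2, (hτ _).2]
    ring

theorem stmt_3_general (m n : ℕ) (hn : 1 ≤ n)
    (ρ τ : Equiv.Perm (ℤ × Set.Icc (1 : ℤ) (2 * (n : ℤ))))
    (hρ : ∀ p, (ρ p).1 = p.1 + (p.2 : ℤ) - (n : ℤ) ∧
      ((ρ p).2 : ℤ) = 2 * (n : ℤ) + 1 - (p.2 : ℤ))
    (hτ : ∀ p, (τ p).1 = p.1 - 1 ∧ ((τ p).2 : ℤ) = (p.2 : ℤ)) :
    ρ * τ ^ ((1 : ℤ) - (n : ℤ)) ∈ Subgroup.zpowers (ρ * τ ^ (m : ℤ)) ↔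
      (2 * (m : ℤ) - 1) ∣ (2 * (n : ℤ) - 1) := by
  have hρτ := mesh_rho_sq_mul_tau_eq_one ρ τ hρ hτ
  have : Nonempty (ℤ × Set.Icc (1 : ℤ) (2 * (n : ℤ))) := ⟨(0, ⟨1, by omega, by omega⟩)⟩
  have hτ_inf := not_isOfFinOrder_of_apply_eq_sub_one Prod.fst τ fun p ↦ (hτ p).1
  have hρ_inf : ¬IsOfFinOrder ρ := fun h ↦
    hτ_inf (isOfFinOrder_inv_iff.1 (eq_inv_of_mul_eq_one_left hρτ ▸ h.pow))
  rw [mul_zpow_eq_zpow_of_sq_mul_eq_one hρτ, mul_zpow_eq_zpow_of_sq_mul_eq_one hρτ,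
    zpow_mem_zpowers_zpow_iff hρ_inf, show (1 : ℤ) - 2 * m = -(2 * m - 1) by ring, neg_dvd]
  ring_nf

/-- with `ρ(k,i) = (k+i-n, 2n+1-i)` and `τ(k,i) = (k-1,i)` acting on
`ℤ × {1,...,2n}`, and `ν = ρ ∘ τ^{1-n}`, one has `ν ∈ ⟨ρ ∘ τ^m⟩` if and only if
`2m-1` divides `2n-1`. -/
theorem stmt_3 (m n : ℕ) (hm : 1 ≤ m) (hn : 1 ≤ n)
    (ρ τ : Equiv.Perm (ℤ × Set.Icc (1 : ℤ) (2 * (n : ℤ))))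
    (hρ : ∀ p, (ρ p).1 = p.1 + (p.2 : ℤ) - (n : ℤ) ∧
      ((ρ p).2 : ℤ) = 2 * (n : ℤ) + 1 - (p.2 : ℤ))
    (hτ : ∀ p, (τ p).1 = p.1 - 1 ∧ ((τ p).2 : ℤ) = (p.2 : ℤ)) :
    ρ * τ ^ ((1 : ℤ) - (n : ℤ)) ∈ Subgroup.zpowers (ρ * τ ^ (m : ℤ)) ↔
      (2 * (m : ℤ) - 1) ∣ (2 * (n : ℤ) - 1) :=
  stmt_3_general m n hn ρ τ hρ hτ
end

section
/- In the group ℤ/2 × ℤ with ρ = (1,0) and τ = (0,-1), and n ≥ 2 odd (corresponding to Δ = D_{2r} with n = 2r-1), the element τ^{1-n} belongs to the subgroup generated by ρτ^m if and only if m divides n-1 and (n-1)/m is even. -/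
/-- in the group `ℤ/2 × ℤ` with `ρ = (1,0)`, `τ = (0,-1)` and `n ≥ 2` odd,
`τ^{1-n} ∈ ⟨ρ τ^m⟩` if and only if `m` divides `n-1` and `(n-1)/m` is even. -/
theorem stmt_6 (m n : ℕ) (hm : 1 ≤ m) (hn : 2 ≤ n) (hodd : Odd n) :
    (((1 : ℤ) - (n : ℤ)) • ((0 : ZMod 2), (-1 : ℤ)) ∈
        AddSubgroup.zmultiples
          (((1 : ZMod 2), (0 : ℤ)) + (m : ℤ) • ((0 : ZMod 2), (-1 : ℤ)))) ↔
      ((m : ℤ) ∣ ((n : ℤ) - 1) ∧ Even (((n : ℤ) - 1) / (m : ℤ))) := by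
  have hm0 : (m : ℤ) ≠ 0 := by exact_mod_cast Nat.one_le_iff_ne_zero.mp hm
  rw [AddSubgroup.mem_zmultiples_iff]
  constructor
  · rintro ⟨k, hk⟩
    rw [Prod.ext_iff] at hk
    obtain ⟨h1, h2⟩ := hk
    simp only [Prod.fst_add, Prod.snd_add, Prod.smul_fst, Prod.smul_snd, smul_eq_mul,
      smul_zero, smul_neg] at h1 h2
    -- h2 : k * (0 + m * -1) = (1 - n) * -1
    have hkm : (-k) * (m : ℤ) = (n : ℤ) - 1 := by ring_nf at h2 ⊢; linarith
    have hdvd : (m : ℤ) ∣ ((n : ℤ) - 1) := ⟨-k, by linarith [hkm]⟩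
    refine ⟨hdvd, ?_⟩
    have hq : ((n : ℤ) - 1) / (m : ℤ) = -k := by
      rw [← hkm, Int.mul_ediv_cancel _ hm0]
    rw [hq, even_neg]
    -- from h1 : k • (1 + m • 0 : ZMod 2) = (1-n) • 0, deduce k even
    have h1' : (k : ZMod 2) = 0 := by
      simpa [zsmul_eq_mul] using h1
    have : (2 : ℤ) ∣ k := by
      rwa [ZMod.intCast_zmod_eq_zero_iff_dvd] at h1'
    exact even_iff_two_dvd.mpr this
  · rintro ⟨⟨k, hk⟩, heven⟩
    refine ⟨-k, ?_⟩
    have hq : ((n : ℤ) - 1) / (m : ℤ) = k := by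
      rw [hk, Int.mul_ediv_cancel_left _ hm0]
    rw [hq] at heven
    have hk2 : (k : ZMod 2) = 0 := by
      rw [ZMod.intCast_zmod_eq_zero_iff_dvd]
      exact heven.two_dvd
    apply Prod.ext
    · simpa [zsmul_eq_mul] using hk2
    · simp only [Prod.snd_add, Prod.smul_snd, smul_eq_mul]
      ring_nf
      linarith [hk]
end

section
/- Let m ≥ 1 and n ≥ 1. In the group ℤ/2 × ℤ with ρ = (1,0), τ = (0,-1), let u be the smallest positive integer r such that ρ^r τ^{-nr} lies in the subgroup generated by ρτ^m. Then u = 2m / gcd(2m, m+n). -/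
lemma mem_char (m n r : ℕ) (hm : 1 ≤ m) :
    ((r : ℤ) • ((1 : ZMod 2), (0 : ℤ)) + (-(n : ℤ) * (r : ℤ)) • ((0 : ZMod 2), (-1 : ℤ)) ∈
      AddSubgroup.zmultiples
        (((1 : ZMod 2), (0 : ℤ)) + (m : ℤ) • ((0 : ZMod 2), (-1 : ℤ))))
    ↔ (2 * m) ∣ (m + n) * r := by
  rw [AddSubgroup.mem_zmultiples_iff]
  constructor
  · rintro ⟨k, hk⟩
    rw [Prod.ext_iff] at hk
    obtain ⟨h1, h2⟩ := hk
    simp [Prod.smul_def, smul_eq_mul] at h1 h2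
    have h1' : (2:ℤ) ∣ r - k := by
      have := (ZMod.intCast_eq_intCast_iff' k r 2).mp (by push_cast; exact h1)
      omega
    obtain ⟨c, hc⟩ := h1'
    rw [← Int.natCast_dvd_natCast]
    push_cast
    have : ((m:ℤ) + n) * r = m * (r - k) := by linarith
    rw [this, hc]
    exact ⟨c, by ring⟩
  · rintro ⟨t, ht⟩
    refine ⟨(r:ℤ) - 2*t, ?_⟩
    have ht' : ((m:ℤ) + n) * r = 2 * m * t := by exact_mod_cast ht
    rw [Prod.ext_iff]
    constructor
    · simp [Prod.smul_def, smul_eq_mul]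
      left; decide
    · simp [Prod.smul_def, smul_eq_mul]
      linarith

/-- in `ℤ/2 × ℤ` with `ρ = (1,0)`, `τ = (0,-1)`, the smallest positive `r`
with `ρ^r τ^{-nr} ∈ ⟨ρ τ^m⟩` is `2m / gcd(2m, m+n)`. -/
theorem stmt_8 (m n : ℕ) (hm : 1 ≤ m) (hn : 1 ≤ n) :
    IsLeast {r : ℕ | 0 < r ∧
        (r : ℤ) • ((1 : ZMod 2), (0 : ℤ)) + (-(n : ℤ) * (r : ℤ)) • ((0 : ZMod 2), (-1 : ℤ)) ∈
          AddSubgroup.zmultiples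
            (((1 : ZMod 2), (0 : ℤ)) + (m : ℤ) • ((0 : ZMod 2), (-1 : ℤ)))}
      (2 * m / Nat.gcd (2 * m) (m + n)) := by
  set g := Nat.gcd (2 * m) (m + n) with hg
  have hgpos : 0 < g := Nat.gcd_pos_of_pos_left _ (by omega)
  have hg1 : g ∣ 2 * m := Nat.gcd_dvd_left _ _
  have hg2 : g ∣ m + n := Nat.gcd_dvd_right _ _
  obtain ⟨a, ha⟩ := hg1
  obtain ⟨b, hb⟩ := hg2
  have hda : 2 * m / g = a := by rw [ha]; exact Nat.mul_div_cancel_left a hgpos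
  have hdb : (m + n) / g = b := by rw [hb]; exact Nat.mul_div_cancel_left b hgpos
  have hcop : Nat.Coprime a b := by
    rw [← hda, ← hdb]; exact Nat.coprime_div_gcd_div_gcd hgpos
  have hapos : 0 < a := by
    rcases Nat.eq_zero_or_pos a with h | h
    · subst h; simp at ha; omega
    · exact h
  constructor
  · refine ⟨by omega, (mem_char m n _ hm).mpr ?_⟩
    rw [hda, hb, ha]
    exact ⟨b, by ring⟩
  · rintro r ⟨hr, hmem⟩
    have hdvd : 2 * m ∣ (m + n) * r := (mem_char m n r hm).mp hmem
    rw [ha, hb, mul_assoc] at hdvd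
    have : a ∣ b * r := (mul_dvd_mul_iff_left (by omega : g ≠ 0)).mp hdvd
    have : a ∣ r := hcop.dvd_of_dvd_mul_left this
    rw [hda]
    exact Nat.le_of_dvd hr this
end

section
/- Let Q be the cyclic quiver with vertex set ℤ/n (n ≥ 1) and arrows a_i : i → i+1, and let Λ = KQ/(KQ)_{≥2} be its quotient by all paths of length 2, over a field K. Let μ̄ be the algebra automorphism of Λ fixing K-linearly determined by μ̄(e_i) = e_{i+1} and μ̄(a_i) = -a_{i+1}. Then the kernel of the multiplication map ⊕_{i∈ℤ/n} Λe_i ⊗ e_iΛ → Λ is generated as a Λ-bimodule by the elements x_i = a_i ⊗ e_{i+1} - e_i ⊗ a_i, equals ⊕_i Λx_i = ⊕_i x_iΛ, and is isomorphic as a Λ-bimodule to the twisted bimodule _{μ̄}Λ_1. -/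
/-!
Put `ξ = ∑ᵢ xᵢ` (`syzygySum`) and `η = ∑ᵢ eᵢ ⊗ eᵢ` (`vertexDiag`). Checking on the basis gives
`b • ξ = ξ • μ̄ b` and `b • η = η • b + ξ • D b`, where `D eᵢ = 0` and `D aᵢ = e_{i+1}`. Hence
`g y = ξ • y` is a bimodule map `_{μ̄}Λ_1 → Λ ⊗ Λ` with `g e_{i+1} = xᵢ`, and every generator
`b eᵢ ⊗ eᵢ c` of `⊕ᵢ Λeᵢ ⊗ eᵢΛ` lies in `ξΛ + ηΛ`. As `ξ` multiplies out to `0` while `η • y`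
multiplies out to `y`, the modular law identifies the kernel with `ξΛ`. The map `u ⊗ v ↦ α(u) v`,
with `α` the sum of the arrow coordinates, sends `ξ` to `1`, so `g` is injective, and it carries the
decompositions `Λ = ⊕ᵢ Λeᵢ = ⊕ᵢ eᵢΛ` to `⊕ᵢ Λxᵢ` and `⊕ᵢ xᵢΛ`.
-/

open TensorProduct

/-- Left multiplication by `b` on the first tensor factor of `Λ ⊗[K] Λ`
(the left action of the `Λ`-bimodule `Λ ⊗ Λ`). -/
noncomputable def lAct (K Λ : Type*) [CommRing K] [Ring Λ] [Algebra K Λ] (b : Λ) :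
    TensorProduct K Λ Λ →ₗ[K] TensorProduct K Λ Λ :=
  LinearMap.rTensor Λ (LinearMap.mulLeft K b)

/-- Right multiplication by `b` on the second tensor factor of `Λ ⊗[K] Λ`
(the right action of the `Λ`-bimodule `Λ ⊗ Λ`). -/
noncomputable def rAct (K Λ : Type*) [CommRing K] [Ring Λ] [Algebra K Λ] (b : Λ) :
    TensorProduct K Λ Λ →ₗ[K] TensorProduct K Λ Λ :=
  LinearMap.lTensor Λ (LinearMap.mulRight K b)

section Bimodule

variable {K Λ : Type*} [CommRing K] [Ring Λ] [Algebra K Λ]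

@[simp]
lemma lAct_tmul (b u v : Λ) : lAct K Λ b (u ⊗ₜ v) = (b * u) ⊗ₜ v := rfl

@[simp]
lemma rAct_tmul (c u v : Λ) : rAct K Λ c (u ⊗ₜ v) = u ⊗ₜ (v * c) := rfl

lemma rAct_one (t : Λ ⊗[K] Λ) : rAct K Λ 1 t = t := by
  induction t using TensorProduct.induction_on <;> simp_all

lemma rAct_mul (c d : Λ) (t : Λ ⊗[K] Λ) : rAct K Λ (c * d) t = rAct K Λ d (rAct K Λ c t) := by
  induction t using TensorProduct.induction_on <;> simp_all [mul_assoc]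

lemma lAct_rAct_comm (b c : Λ) (t : Λ ⊗[K] Λ) :
    lAct K Λ b (rAct K Λ c t) = rAct K Λ c (lAct K Λ b t) := by
  induction t using TensorProduct.induction_on <;> simp_all

lemma mul'_rAct (c : Λ) (t : Λ ⊗[K] Λ) :
    LinearMap.mul' K Λ (rAct K Λ c t) = LinearMap.mul' K Λ t * c := by
  induction t using TensorProduct.induction_on <;> simp_all [mul_assoc, add_mul]

lemma lid_comp_rTensor_rAct (α : Λ →ₗ[K] K) (c : Λ) (t : Λ ⊗[K] Λ) :
    ((TensorProduct.lid K Λ).toLinearMap ∘ₗ α.rTensor Λ) (rAct K Λ c t) =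
      ((TensorProduct.lid K Λ).toLinearMap ∘ₗ α.rTensor Λ) t * c := by
  induction t using TensorProduct.induction_on <;> simp_all [add_mul]

noncomputable def lActMap (t : Λ ⊗[K] Λ) : Λ →ₗ[K] Λ ⊗[K] Λ where
  toFun b := lAct K Λ b t
  map_add' b b' := by
    induction t using TensorProduct.induction_on <;> simp_all [add_mul, add_tmul, add_add_add_comm]
  map_smul' r b := by induction t using TensorProduct.induction_on <;> simp_all [smul_tmul']

noncomputable def rActMap (t : Λ ⊗[K] Λ) : Λ →ₗ[K] Λ ⊗[K] Λ where
  toFun c := rAct K Λ c t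
  map_add' c c' := by
    induction t using TensorProduct.induction_on <;> simp_all [mul_add, tmul_add, add_add_add_comm]
  map_smul' r c := by induction t using TensorProduct.induction_on <;> simp_all

@[simp]
lemma lActMap_apply (t : Λ ⊗[K] Λ) (b : Λ) : lActMap t b = lAct K Λ b t := rfl

@[simp]
lemma rActMap_apply (t : Λ ⊗[K] Λ) (c : Λ) : rActMap t c = rAct K Λ c t := rfl

@[simp]
lemma rAct_zero (t : Λ ⊗[K] Λ) : rAct K Λ 0 t = 0 := map_zero (rActMap t)

@[simp]
lemma rAct_neg (c : Λ) (t : Λ ⊗[K] Λ) : rAct K Λ (-c) t = -rAct K Λ c t :=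
  map_neg (rActMap t) c

lemma rActMap_mul (t : Λ ⊗[K] Λ) (y b : Λ) : rActMap t (y * b) = rAct K Λ b (rActMap t y) :=
  rAct_mul y b t

lemma rActMap_leftInverse {φ : Λ ⊗[K] Λ →ₗ[K] Λ} (hφ : ∀ c t, φ (rAct K Λ c t) = φ t * c)
    {t : Λ ⊗[K] Λ} (ht : φ t = 1) : Function.LeftInverse φ (rActMap t) := fun c => by
  rw [rActMap_apply, hφ, ht, one_mul]

lemma disjoint_range_rActMap_ker {φ : Λ ⊗[K] Λ →ₗ[K] Λ}
    (hφ : ∀ c t, φ (rAct K Λ c t) = φ t * c) {t : Λ ⊗[K] Λ} (ht : φ t = 1) :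
    Disjoint (LinearMap.range (rActMap t)) (LinearMap.ker φ) := by
  rw [Submodule.disjoint_def]
  rintro _ ⟨c, rfl⟩ hc
  rw [LinearMap.mem_ker, rActMap_leftInverse hφ ht c] at hc
  rw [hc, map_zero]

lemma rAct_mem_span_lAct_rAct {ι : Type*} {s : ι → Λ ⊗[K] Λ} {t : Λ ⊗[K] Λ}
    (ht : t ∈ Submodule.span K {t | ∃ b c i, t = lAct K Λ b (rAct K Λ c (s i))}) (y : Λ) :
    rAct K Λ y t ∈ Submodule.span K {t | ∃ b c i, t = lAct K Λ b (rAct K Λ c (s i))} := by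
  have : Submodule.span K {t | ∃ b c i, t = lAct K Λ b (rAct K Λ c (s i))} ≤
      (Submodule.span K {t | ∃ b c i, t = lAct K Λ b (rAct K Λ c (s i))}).comap
        (rAct K Λ y) := by
    rw [Submodule.span_le]
    rintro _ ⟨b, c, i, rfl⟩
    exact Submodule.subset_span ⟨b, c * y, i, by rw [rAct_mul, lAct_rAct_comm b y]⟩
  exact this ht

end Bimodule

section TwistedBimoduleMap

variable {K Λ : Type*} [CommRing K] [Ring Λ] [Algebra K Λ] {μ : Λ ≃ₐ[K] Λ}
  {g : Λ →ₗ[K] Λ ⊗[K] Λ}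

lemma span_lAct_eq_map_range_mulRight (hl : ∀ b y, g (μ b * y) = lAct K Λ b (g y)) (y : Λ) :
    Submodule.span K {t | ∃ b, t = lAct K Λ b (g y)} =
      (LinearMap.range (LinearMap.mulRight K y)).map g := by
  have : {t | ∃ b, t = lAct K Λ b (g y)} = LinearMap.range (g ∘ₗ LinearMap.mulRight K y) := by
    ext t
    constructor
    · rintro ⟨b, rfl⟩
      exact ⟨μ b, hl b y⟩
    · rintro ⟨c, rfl⟩
      exact ⟨μ.symm c, by simp [← hl]⟩
  rw [this, Submodule.span_eq, LinearMap.range_comp]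

lemma span_rAct_eq_map_range_mulLeft (hr : ∀ b y, g (y * b) = rAct K Λ b (g y)) (y : Λ) :
    Submodule.span K {t | ∃ c, t = rAct K Λ c (g y)} =
      (LinearMap.range (LinearMap.mulLeft K y)).map g := by
  have : {t | ∃ c, t = rAct K Λ c (g y)} = LinearMap.range (g ∘ₗ LinearMap.mulLeft K y) := by
    ext t
    constructor
    · rintro ⟨c, rfl⟩
      exact ⟨c, hr c y⟩
    · rintro ⟨c, rfl⟩
      exact ⟨c, hr c y⟩
  rw [this, Submodule.span_eq, LinearMap.range_comp]

variable {ι : Type*} [Fintype ι] {x : ι → Λ ⊗[K] Λ}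

lemma span_lAct_eq_range (hl : ∀ b y, g (μ b * y) = lAct K Λ b (g y))
    (hx : ∀ i, x i ∈ LinearMap.range g) (hsum : ∑ i, x i = g 1) :
    Submodule.span K {t | ∃ b i, t = lAct K Λ b (x i)} = LinearMap.range g := by
  refine le_antisymm (Submodule.span_le.2 ?_) ?_
  · rintro _ ⟨b, i, rfl⟩
    obtain ⟨y, hy⟩ := hx i
    exact ⟨μ b * y, by rw [hl, hy]⟩
  · rintro _ ⟨y, rfl⟩
    have : g y = ∑ i, lAct K Λ (μ.symm y) (x i) := by
      rw [← map_sum, hsum, ← hl, mul_one, μ.apply_symm_apply]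
    rw [this]
    exact Submodule.sum_mem _ fun i _ => Submodule.subset_span ⟨_, i, rfl⟩

lemma span_rAct_eq_range (hr : ∀ b y, g (y * b) = rAct K Λ b (g y))
    (hx : ∀ i, x i ∈ LinearMap.range g) (hsum : ∑ i, x i = g 1) :
    Submodule.span K {t | ∃ c i, t = rAct K Λ c (x i)} = LinearMap.range g := by
  refine le_antisymm (Submodule.span_le.2 ?_) ?_
  · rintro _ ⟨c, i, rfl⟩
    obtain ⟨y, hy⟩ := hx i
    exact ⟨y * c, by rw [hr, hy]⟩
  · rintro _ ⟨y, rfl⟩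
    have : g y = ∑ i, rAct K Λ y (x i) := by
      rw [← map_sum, hsum, ← hr, one_mul]
    rw [this]
    exact Submodule.sum_mem _ fun i _ => Submodule.subset_span ⟨_, i, rfl⟩

lemma span_lAct_rAct_eq_range (hl : ∀ b y, g (μ b * y) = lAct K Λ b (g y))
    (hr : ∀ b y, g (y * b) = rAct K Λ b (g y))
    (hx : ∀ i, x i ∈ LinearMap.range g) (hsum : ∑ i, x i = g 1) :
    Submodule.span K {t | ∃ b c i, t = lAct K Λ b (rAct K Λ c (x i))} = LinearMap.range g := by
  refine le_antisymm (Submodule.span_le.2 ?_) ?_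
  · rintro _ ⟨b, c, i, rfl⟩
    obtain ⟨y, hy⟩ := hx i
    exact ⟨μ b * (y * c), by rw [hl, hr, hy]⟩
  · rw [← span_lAct_eq_range hl hx hsum]
    exact Submodule.span_mono fun _ ⟨b, i, h⟩ => ⟨b, 1, i, by rw [rAct_one, h]⟩

end TwistedBimoduleMap

section Idempotents

lemma OrthogonalIdempotents.iSupIndep_range {R M ι : Type*} [Semiring R] [AddCommMonoid M]
    [Module R M] {P : ι → Module.End R M} (hP : OrthogonalIdempotents P) :
    iSupIndep fun i => LinearMap.range (P i) := by
  intro i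
  rw [Submodule.disjoint_def]
  rintro _ ⟨m, rfl⟩ hm
  have hker : (⨆ (j) (_ : j ≠ i), LinearMap.range (P j)) ≤ LinearMap.ker (P i) :=
    iSup₂_le fun j hj => by
      rintro _ ⟨m', rfl⟩
      rw [LinearMap.mem_ker, ← Module.End.mul_apply, hP.ortho hj.symm, LinearMap.zero_apply]
  simpa [← Module.End.mul_apply, (hP.idem i).eq] using hker hm

variable {K Λ ι : Type*} [CommRing K] [Ring Λ] [Algebra K Λ] {e : ι → Λ}

lemma OrthogonalIdempotents.mulLeft (he : OrthogonalIdempotents e) :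
    OrthogonalIdempotents fun i => LinearMap.mulLeft K (e i) :=
  ⟨fun i => LinearMap.ext fun y => by simp [← mul_assoc, (he.idem i).eq],
    fun i j hij => LinearMap.ext fun y => by simp [← mul_assoc, he.ortho hij]⟩

lemma OrthogonalIdempotents.mulRight (he : OrthogonalIdempotents e) :
    OrthogonalIdempotents fun i => LinearMap.mulRight K (e i) :=
  ⟨fun i => LinearMap.ext fun y => by simp [mul_assoc, (he.idem i).eq],
    fun i j hij => LinearMap.ext fun y => by simp [mul_assoc, he.ortho hij.symm]⟩

end Idempotents

structure IsTruncatedCyclicQuiver {Λ : Type*} [Ring Λ] {n : ℕ} (e a : ZMod n → Λ) : Prop where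
  vertex_mul_vertex : ∀ i j, e i * e j = if i = j then e i else 0
  vertex_mul_arrow : ∀ i j, e i * a j = if i = j then a j else 0
  arrow_mul_vertex : ∀ i j, a i * e j = if j = i + 1 then a i else 0
  arrow_mul_arrow : ∀ i j, a i * a j = 0

noncomputable def syzygyGen (K : Type*) {Λ : Type*} [CommRing K] [Ring Λ] [Algebra K Λ] {n : ℕ}
    (e a : ZMod n → Λ) (i : ZMod n) : Λ ⊗[K] Λ :=
  a i ⊗ₜ e (i + 1) - e i ⊗ₜ a i

noncomputable def syzygySum (K : Type*) {Λ : Type*} [CommRing K] [Ring Λ] [Algebra K Λ] {n : ℕ}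
    [NeZero n] (e a : ZMod n → Λ) : Λ ⊗[K] Λ :=
  ∑ i, syzygyGen K e a i

noncomputable def vertexDiag (K : Type*) {Λ : Type*} [CommRing K] [Ring Λ] [Algebra K Λ] {n : ℕ}
    [NeZero n] (e : ZMod n → Λ) : Λ ⊗[K] Λ :=
  ∑ i, e i ⊗ₜ[K] e i

section CyclicQuiver

variable {K Λ : Type*} [CommRing K] [Ring Λ] [Algebra K Λ] {n : ℕ} {e a : ZMod n → Λ}

lemma linearMap_ext_vertex_arrow {M : Type*} [AddCommGroup M] [Module K M]
    (bas : Module.Basis (ZMod n ⊕ ZMod n) K Λ)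
    (hbas : ∀ i, bas (Sum.inl i) = e i ∧ bas (Sum.inr i) = a i) {f f' : Λ →ₗ[K] M}
    (he : ∀ i, f (e i) = f' (e i)) (ha : ∀ i, f (a i) = f' (a i)) : f = f' :=
  bas.ext fun
    | .inl i => by rw [(hbas i).1, he]
    | .inr i => by rw [(hbas i).2, ha]

lemma exists_linearMap_vertex_arrow {M : Type*} [AddCommGroup M] [Module K M]
    (bas : Module.Basis (ZMod n ⊕ ZMod n) K Λ)
    (hbas : ∀ i, bas (Sum.inl i) = e i ∧ bas (Sum.inr i) = a i) (u v : ZMod n → M) :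
    ∃ f : Λ →ₗ[K] M, (∀ i, f (e i) = u i) ∧ ∀ i, f (a i) = v i :=
  ⟨bas.constr K (Sum.elim u v), fun i => by rw [← (hbas i).1, bas.constr_basis]; rfl,
    fun i => by rw [← (hbas i).2, bas.constr_basis]; rfl⟩

variable [NeZero n]

lemma injective_rActMap_syzygySum (bas : Module.Basis (ZMod n ⊕ ZMod n) K Λ)
    (hbas : ∀ i, bas (Sum.inl i) = e i ∧ bas (Sum.inr i) = a i) (hone : ∑ i, e i = 1) :
    Function.Injective (rActMap (syzygySum K e a)) := by
  obtain ⟨α, hαe, hαa⟩ := exists_linearMap_vertex_arrow bas hbas (fun _ => (0 : K)) (fun _ => 1)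
  refine (rActMap_leftInverse (lid_comp_rTensor_rAct α) ?_).injective
  simpa [syzygySum, syzygyGen, hαe, hαa, hone] using Equiv.sum_comp (Equiv.addRight (1 : ZMod n)) e

namespace IsTruncatedCyclicQuiver

lemma rAct_vertex_syzygySum (hΛ : IsTruncatedCyclicQuiver e a) (j : ZMod n) :
    rAct K Λ (e (j + 1)) (syzygySum K e a) = syzygyGen K e a j := by
  simp [syzygySum, syzygyGen, hΛ.vertex_mul_vertex, hΛ.arrow_mul_vertex, tmul_ite]

lemma lAct_vertex_syzygySum (hΛ : IsTruncatedCyclicQuiver e a) (j : ZMod n) :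
    lAct K Λ (e j) (syzygySum K e a) = syzygyGen K e a j := by
  simp [syzygySum, syzygyGen, hΛ.vertex_mul_vertex, hΛ.vertex_mul_arrow, ite_tmul]

lemma rAct_arrow_syzygySum (hΛ : IsTruncatedCyclicQuiver e a) (j : ZMod n) :
    rAct K Λ (a (j + 1)) (syzygySum K e a) = a j ⊗ₜ a (j + 1) := by
  simp [syzygySum, syzygyGen, hΛ.vertex_mul_arrow, hΛ.arrow_mul_arrow, tmul_ite]

lemma lAct_arrow_syzygySum (hΛ : IsTruncatedCyclicQuiver e a) (j : ZMod n) :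
    lAct K Λ (a j) (syzygySum K e a) = -(a j ⊗ₜ a (j + 1)) := by
  simp [syzygySum, syzygyGen, hΛ.arrow_mul_vertex, hΛ.arrow_mul_arrow, ite_tmul]

lemma rAct_vertex_vertexDiag (hΛ : IsTruncatedCyclicQuiver e a) (j : ZMod n) :
    rAct K Λ (e j) (vertexDiag K e) = e j ⊗ₜ e j := by
  simp [vertexDiag, hΛ.vertex_mul_vertex, tmul_ite]

lemma lAct_vertex_vertexDiag (hΛ : IsTruncatedCyclicQuiver e a) (j : ZMod n) :
    lAct K Λ (e j) (vertexDiag K e) = e j ⊗ₜ e j := by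
  simp [vertexDiag, hΛ.vertex_mul_vertex, ite_tmul]

lemma rAct_arrow_vertexDiag (hΛ : IsTruncatedCyclicQuiver e a) (j : ZMod n) :
    rAct K Λ (a j) (vertexDiag K e) = e j ⊗ₜ a j := by
  simp [vertexDiag, hΛ.vertex_mul_arrow, tmul_ite]

lemma lAct_arrow_vertexDiag (hΛ : IsTruncatedCyclicQuiver e a) (j : ZMod n) :
    lAct K Λ (a j) (vertexDiag K e) = a j ⊗ₜ e (j + 1) := by
  simp [vertexDiag, hΛ.arrow_mul_vertex, ite_tmul]

lemma mul'_syzygySum (hΛ : IsTruncatedCyclicQuiver e a) :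
    LinearMap.mul' K Λ (syzygySum K e a) = 0 := by
  simp [syzygySum, syzygyGen, hΛ.vertex_mul_arrow, hΛ.arrow_mul_vertex]

lemma mul'_vertexDiag (hΛ : IsTruncatedCyclicQuiver e a) (hone : ∑ i, e i = 1) :
    LinearMap.mul' K Λ (vertexDiag K e) = 1 := by
  simp [vertexDiag, hΛ.vertex_mul_vertex, hone]

lemma lAct_syzygySum (hΛ : IsTruncatedCyclicQuiver e a)
    (bas : Module.Basis (ZMod n ⊕ ZMod n) K Λ)
    (hbas : ∀ i, bas (Sum.inl i) = e i ∧ bas (Sum.inr i) = a i) {μ : Λ ≃ₐ[K] Λ}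
    (hμe : ∀ i, μ (e i) = e (i + 1)) (hμa : ∀ i, μ (a i) = -a (i + 1)) (b : Λ) :
    lAct K Λ b (syzygySum K e a) = rAct K Λ (μ b) (syzygySum K e a) := by
  have : lActMap (syzygySum K e a) = rActMap (syzygySum K e a) ∘ₗ μ.toLinearMap :=
    linearMap_ext_vertex_arrow bas hbas
      (fun i => by simp [hμe, hΛ.lAct_vertex_syzygySum, hΛ.rAct_vertex_syzygySum])
      (fun i => by simp [hμa, hΛ.lAct_arrow_syzygySum, hΛ.rAct_arrow_syzygySum])
  exact LinearMap.congr_fun this b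

lemma lAct_vertexDiag (hΛ : IsTruncatedCyclicQuiver e a)
    (bas : Module.Basis (ZMod n ⊕ ZMod n) K Λ)
    (hbas : ∀ i, bas (Sum.inl i) = e i ∧ bas (Sum.inr i) = a i) {D : Λ →ₗ[K] Λ}
    (hDe : ∀ i, D (e i) = 0) (hDa : ∀ i, D (a i) = e (i + 1)) (b : Λ) :
    lAct K Λ b (vertexDiag K e) =
      rAct K Λ b (vertexDiag K e) + rAct K Λ (D b) (syzygySum K e a) := by
  have : lActMap (vertexDiag K e) = rActMap (vertexDiag K e) + rActMap (syzygySum K e a) ∘ₗ D :=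
    linearMap_ext_vertex_arrow bas hbas
      (fun i => by simp [hDe, hΛ.lAct_vertex_vertexDiag, hΛ.rAct_vertex_vertexDiag])
      (fun i => by
        simp [hDa, hΛ.lAct_arrow_vertexDiag, hΛ.rAct_arrow_vertexDiag, hΛ.rAct_vertex_syzygySum,
          syzygyGen])
  exact LinearMap.congr_fun this b

lemma range_rActMap_syzygySum_le (hΛ : IsTruncatedCyclicQuiver e a) :
    LinearMap.range (rActMap (syzygySum K e a)) ≤
      Submodule.span K {t | ∃ b c i, t = lAct K Λ b (rAct K Λ c (e i ⊗ₜ[K] e i))} := by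
  rintro _ ⟨y, rfl⟩
  refine rAct_mem_span_lAct_rAct (Submodule.sum_mem _ fun i _ => sub_mem ?_ ?_) y
  · exact Submodule.subset_span ⟨a i, e (i + 1), i + 1, by
      simp [hΛ.arrow_mul_vertex, hΛ.vertex_mul_vertex]⟩
  · exact Submodule.subset_span ⟨e i, a i, i, by
      simp [hΛ.vertex_mul_vertex, hΛ.vertex_mul_arrow]⟩

lemma span_le_range_sup_range (hΛ : IsTruncatedCyclicQuiver e a)
    (bas : Module.Basis (ZMod n ⊕ ZMod n) K Λ)
    (hbas : ∀ i, bas (Sum.inl i) = e i ∧ bas (Sum.inr i) = a i) :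
    Submodule.span K {t | ∃ b c i, t = lAct K Λ b (rAct K Λ c (e i ⊗ₜ[K] e i))} ≤
      LinearMap.range (rActMap (syzygySum K e a)) ⊔
        LinearMap.range (rActMap (vertexDiag K e)) := by
  obtain ⟨D, hDe, hDa⟩ :=
    exists_linearMap_vertex_arrow bas hbas (fun _ => (0 : Λ)) (fun i => e (i + 1))
  rw [Submodule.span_le]
  rintro _ ⟨b, c, i, rfl⟩
  have : lAct K Λ b (rAct K Λ c (e i ⊗ₜ e i)) =
      rAct K Λ (D b * (e i * c)) (syzygySum K e a) +
        rAct K Λ (b * (e i * c)) (vertexDiag K e) := by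
    rw [← hΛ.rAct_vertex_vertexDiag, ← rAct_mul, lAct_rAct_comm,
      hΛ.lAct_vertexDiag bas hbas hDe hDa, map_add, ← rAct_mul, ← rAct_mul, add_comm]
  rw [SetLike.mem_coe, this]
  exact add_mem (Submodule.mem_sup_left ⟨_, rfl⟩) (Submodule.mem_sup_right ⟨_, rfl⟩)

lemma span_inf_ker_mul'_eq_range (hΛ : IsTruncatedCyclicQuiver e a)
    (bas : Module.Basis (ZMod n ⊕ ZMod n) K Λ)
    (hbas : ∀ i, bas (Sum.inl i) = e i ∧ bas (Sum.inr i) = a i) (hone : ∑ i, e i = 1) :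
    Submodule.span K {t | ∃ b c i, t = lAct K Λ b (rAct K Λ c (e i ⊗ₜ[K] e i))} ⊓
      LinearMap.ker (LinearMap.mul' K Λ) = LinearMap.range (rActMap (syzygySum K e a)) := by
  have hker :
      LinearMap.range (rActMap (syzygySum K e a)) ≤ LinearMap.ker (LinearMap.mul' K Λ) := by
    rintro _ ⟨y, rfl⟩
    rw [LinearMap.mem_ker, rActMap_apply, mul'_rAct, hΛ.mul'_syzygySum, zero_mul]
  have hdisj : Disjoint (LinearMap.range (rActMap (vertexDiag K e)))
      (LinearMap.ker (LinearMap.mul' K Λ)) :=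
    disjoint_range_rActMap_ker mul'_rAct (hΛ.mul'_vertexDiag hone)
  refine le_antisymm ?_ (le_inf hΛ.range_rActMap_syzygySum_le hker)
  calc _ ≤ (LinearMap.range (rActMap (syzygySum K e a)) ⊔
          LinearMap.range (rActMap (vertexDiag K e))) ⊓ LinearMap.ker (LinearMap.mul' K Λ) :=
        inf_le_inf_right _ (hΛ.span_le_range_sup_range bas hbas)
    _ = _ := by rw [sup_inf_assoc_of_le _ hker, hdisj.eq_bot, sup_bot_eq]

end IsTruncatedCyclicQuiver

end CyclicQuiver

theorem stmt_15_general (K : Type*) [Field K] (n : ℕ) [NeZero n]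
    (Λ : Type*) [Ring Λ] [Algebra K Λ]
    (e a : ZMod n → Λ)
    (bas : Module.Basis (ZMod n ⊕ ZMod n) K Λ)
    (hbas : ∀ i, bas (Sum.inl i) = e i ∧ bas (Sum.inr i) = a i)
    (hee : ∀ i j, e i * e j = if i = j then e i else 0)
    (hea : ∀ i j, e i * a j = if i = j then a j else 0)
    (hae : ∀ i j, a i * e j = if j = i + 1 then a i else 0)
    (haa : ∀ i j, a i * a j = 0)
    (hone : (∑ i, e i) = 1)
    (μbar : Λ ≃ₐ[K] Λ)
    (hμe : ∀ i, μbar (e i) = e (i + 1))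
    (hμa : ∀ i, μbar (a i) = -(a (i + 1)))
    (x : ZMod n → TensorProduct K Λ Λ)
    (hx : ∀ i, x i = a i ⊗ₜ[K] e (i + 1) - e i ⊗ₜ[K] a i)
    (Ker : Submodule K (TensorProduct K Λ Λ))
    (hKer : Ker =
      Submodule.span K {t | ∃ b c i, t = lAct K Λ b (rAct K Λ c (e i ⊗ₜ[K] e i))} ⊓
        LinearMap.ker (LinearMap.mul' K Λ)) :
    Ker = Submodule.span K {t | ∃ b c i, t = lAct K Λ b (rAct K Λ c (x i))} ∧
    Ker = Submodule.span K {t | ∃ b i, t = lAct K Λ b (x i)} ∧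
    Ker = Submodule.span K {t | ∃ c i, t = rAct K Λ c (x i)} ∧
    iSupIndep
      (fun i => Submodule.span K {t | ∃ b, t = lAct K Λ b (x i)}) ∧
    iSupIndep
      (fun i => Submodule.span K {t | ∃ c, t = rAct K Λ c (x i)}) ∧
    ∃ g : Λ →ₗ[K] TensorProduct K Λ Λ,
      Function.Injective g ∧ LinearMap.range g = Ker ∧
      (∀ b y, g (μbar b * y) = lAct K Λ b (g y)) ∧
      (∀ b y, g (y * b) = rAct K Λ b (g y)) := by
  have hΛ : IsTruncatedCyclicQuiver e a := ⟨hee, hea, hae, haa⟩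
  obtain rfl : x = syzygyGen K e a := funext fun i => by rw [hx i, syzygyGen]
  set g := rActMap (syzygySum K e a)
  have hl : ∀ b y, g (μbar b * y) = lAct K Λ b (g y) := fun b y => by
    rw [rActMap_mul, rActMap_apply, rActMap_apply, ← hΛ.lAct_syzygySum bas hbas hμe hμa,
      lAct_rAct_comm]
  have hr : ∀ b y, g (y * b) = rAct K Λ b (g y) := fun b y => rActMap_mul _ y b
  have hgen : ∀ i, syzygyGen K e a i ∈ LinearMap.range g :=
    fun i => ⟨e (i + 1), hΛ.rAct_vertex_syzygySum i⟩
  have hsum : ∑ i, syzygyGen K e a i = g 1 := (rAct_one _).symm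
  have hinj : Function.Injective g := injective_rActMap_syzygySum bas hbas hone
  have hidem : OrthogonalIdempotents e := OrthogonalIdempotents.iff_mul_eq.2 hee
  rw [hKer, hΛ.span_inf_ker_mul'_eq_range bas hbas hone]
  refine ⟨(span_lAct_rAct_eq_range hl hr hgen hsum).symm, (span_lAct_eq_range hl hgen hsum).symm,
    (span_rAct_eq_range hr hgen hsum).symm, ?_, ?_, g, hinj, rfl, hl, hr⟩
  · convert (g.iSupIndep_map hinj hidem.mulRight.iSupIndep_range).comp
      (add_left_injective (1 : ZMod n)) with i
    rw [← hΛ.rAct_vertex_syzygySum i]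
    exact span_lAct_eq_map_range_mulRight hl _
  · convert (g.iSupIndep_map hinj hidem.mulLeft.iSupIndep_range).comp
      (add_left_injective (1 : ZMod n)) with i
    rw [← hΛ.rAct_vertex_syzygySum i]
    exact span_rAct_eq_map_range_mulLeft hr _

/-- for the truncated cyclic quiver algebra `Λ = KQ/(KQ)_{≥2}` with
vertices `e i` (`i ∈ ℤ/n`) and arrows `a i : i → i+1`, the kernel of the multiplication
map `⊕_i Λe_i ⊗ e_iΛ → Λ` is generated as a `Λ`-bimodule by the elements
`x_i = a_i ⊗ e_{i+1} - e_i ⊗ a_i`, equals `⊕_i Λx_i = ⊕_i x_iΛ`, and is isomorphic as a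
`Λ`-bimodule to the twisted bimodule `_{μ̄}Λ_1`, where `μ̄(e_i) = e_{i+1}`,
`μ̄(a_i) = -a_{i+1}`. -/
theorem stmt_15 (K : Type*) [Field K] (n : ℕ) [NeZero n] (hn : 1 ≤ n)
    (Λ : Type*) [Ring Λ] [Algebra K Λ]
    (e a : ZMod n → Λ)
    (bas : Module.Basis (ZMod n ⊕ ZMod n) K Λ)
    (hbas : ∀ i, bas (Sum.inl i) = e i ∧ bas (Sum.inr i) = a i)
    (hee : ∀ i j, e i * e j = if i = j then e i else 0)
    (hea : ∀ i j, e i * a j = if i = j then a j else 0)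
    (hae : ∀ i j, a i * e j = if j = i + 1 then a i else 0)
    (haa : ∀ i j, a i * a j = 0)
    (hone : (∑ i, e i) = 1)
    (μbar : Λ ≃ₐ[K] Λ)
    (hμe : ∀ i, μbar (e i) = e (i + 1))
    (hμa : ∀ i, μbar (a i) = -(a (i + 1)))
    (x : ZMod n → TensorProduct K Λ Λ)
    (hx : ∀ i, x i = a i ⊗ₜ[K] e (i + 1) - e i ⊗ₜ[K] a i)
    (Ker : Submodule K (TensorProduct K Λ Λ))
    (hKer : Ker =
      Submodule.span K {t | ∃ b c i, t = lAct K Λ b (rAct K Λ c (e i ⊗ₜ[K] e i))} ⊓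
        LinearMap.ker (LinearMap.mul' K Λ)) :
    Ker = Submodule.span K {t | ∃ b c i, t = lAct K Λ b (rAct K Λ c (x i))} ∧
    Ker = Submodule.span K {t | ∃ b i, t = lAct K Λ b (x i)} ∧
    Ker = Submodule.span K {t | ∃ c i, t = rAct K Λ c (x i)} ∧
    iSupIndep
      (fun i => Submodule.span K {t | ∃ b, t = lAct K Λ b (x i)}) ∧
    iSupIndep
      (fun i => Submodule.span K {t | ∃ c, t = rAct K Λ c (x i)}) ∧
    ∃ g : Λ →ₗ[K] TensorProduct K Λ Λ,
      Function.Injective g ∧ LinearMap.range g = Ker ∧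
      (∀ b y, g (μbar b * y) = lAct K Λ b (g y)) ∧
      (∀ b y, g (y * b) = rAct K Λ b (g y)) :=
  stmt_15_general K n Λ e a bas hbas hee hea hae haa hone μbar hμe hμa x hx Ker hKer
end

section
/- Let Q be the cyclic quiver with vertex set ℤ/n and arrows a_i : i → i+1, and Λ = KQ/(KQ)_{≥2} over a field K. A graded automorphism φ of Λ fixing all vertices e_i and mapping a_i ↦ χ(a_i)a_i for scalars χ(a_i) ∈ K* is inner if and only if the product ∏_{i∈ℤ/n} χ(a_i) equals 1. -/
/-!
The coefficient `x_j` of `e j` in `x` is multiplicative in `x`, because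
`x * a j = x_j • a j`. For a unit `u` these coefficients are therefore units, and comparing
both sides of `u * a i = φ (a i) * u` gives `u_i = χ i * u_{i+1}`, so `∏ χ i` telescopes
to `1`. Conversely, if `∏ χ i = 1`, the partial products `(χ 0 ⋯ χ (m-1))⁻¹` are
`n`-periodic in `m`, so they define `c : ZMod n → Kˣ` with `c i = χ i * c (i + 1)`, and `φ`
is conjugation by `∑ c i • e i`.
-/

open Finset

theorem Fintype.prod_comp_add_right {G M : Type*} [AddGroup G] [Fintype G] [CommMonoid M]
    (f : G → M) (j : G) : ∏ i, f (i + j) = ∏ i, f i :=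
  Fintype.prod_equiv (Equiv.addRight j) _ _ fun _ => rfl

namespace ZMod
variable {n : ℕ} [NeZero n]

theorem prod_range_natCast {M : Type*} [CommMonoid M] (f : ZMod n → M) :
    ∏ k ∈ range n, f k = ∏ i, f i :=
  prod_nbij' Nat.cast val (by simp) (by simp [val_lt])
    (fun _ hk => val_cast_of_lt (mem_range.mp hk)) (fun i _ => natCast_zmod_val i) fun _ _ => rfl

theorem prod_eq_one_iff_exists_eq_mul_succ {G : Type*} [CommGroup G] (χ : ZMod n → G) :
    ∏ i, χ i = 1 ↔ ∃ c : ZMod n → G, ∀ i, c i = χ i * c (i + 1) := by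
  constructor
  · intro hχ
    set c : ℕ → G := fun m => ∏ k ∈ range m, (χ k)⁻¹
    have hper : Function.Periodic c n := fun m => by
      have : ∏ k ∈ range n, χ ↑(m + k) = 1 := by
        simp_rw [Nat.cast_add, add_comm (m : ZMod n)]
        rw [prod_range_natCast fun i : ZMod n => χ (i + m), Fintype.prod_comp_add_right, hχ]
      simp only [c, prod_range_add, prod_inv_distrib, this, mul_one]
    have hcast (m : ℕ) : c (m : ZMod n).val = c m := by rw [val_natCast, hper.map_mod_nat]
    have hsucc (m : ℕ) : c (m + 1) = c m * (χ m)⁻¹ := prod_range_succ _ _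
    refine ⟨fun i => c i.val, fun i => ?_⟩
    obtain ⟨m, rfl⟩ : ∃ m : ℕ, (m : ZMod n) = i := ⟨i.val, natCast_zmod_val i⟩
    show c (m : ZMod n).val = χ m * c ((m : ZMod n) + 1).val
    rw [← Nat.cast_succ, hcast, hcast, Nat.succ_eq_add_one, hsucc, mul_mul_inv_cancel'_right]
  · rintro ⟨c, hc⟩
    calc ∏ i, χ i = ∏ i, c i / c (i + 1) :=
          prod_congr rfl fun i _ => by rw [hc, mul_div_cancel_right]
      _ = 1 := by rw [prod_div_distrib, Fintype.prod_comp_add_right c, div_self']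

end ZMod

namespace TruncatedCyclicQuiver

variable {K Λ : Type*} [Field K] [Ring Λ] [Algebra K Λ] {n : ℕ} {e a : ZMod n → Λ}
  {bas : Module.Basis (ZMod n ⊕ ZMod n) K Λ}

theorem smul_arrow_injective (hbas : ∀ i, bas (Sum.inl i) = e i ∧ bas (Sum.inr i) = a i)
    (i : ZMod n) : Function.Injective fun c : K => c • a i :=
  smul_left_injective K ((hbas i).2 ▸ bas.ne_zero _)

theorem mul_arrow (hbas : ∀ i, bas (Sum.inl i) = e i ∧ bas (Sum.inr i) = a i)
    (hea : ∀ i j, e i * a j = if i = j then a j else 0) (haa : ∀ i j, a i * a j = 0)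
    (x : Λ) (i : ZMod n) : x * a i = bas.repr x (Sum.inl i) • a i := by
  have : LinearMap.mulRight K (a i) = (bas.coord (Sum.inl i)).smulRight (a i) := by
    refine bas.ext fun b => ?_
    simp only [LinearMap.mulRight_apply, LinearMap.smulRight_apply, Module.Basis.coord_apply,
      Module.Basis.repr_self]
    rcases b with j | j <;> simp [(hbas j).1, (hbas j).2, hea, haa, Finsupp.single_apply]
  exact LinearMap.congr_fun this x

theorem arrow_mul (hbas : ∀ i, bas (Sum.inl i) = e i ∧ bas (Sum.inr i) = a i)
    (hae : ∀ i j, a i * e j = if j = i + 1 then a i else 0) (haa : ∀ i j, a i * a j = 0)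
    (x : Λ) (i : ZMod n) : a i * x = bas.repr x (Sum.inl (i + 1)) • a i := by
  have : LinearMap.mulLeft K (a i) = (bas.coord (Sum.inl (i + 1))).smulRight (a i) := by
    refine bas.ext fun b => ?_
    simp only [LinearMap.mulLeft_apply, LinearMap.smulRight_apply, Module.Basis.coord_apply,
      Module.Basis.repr_self]
    rcases b with j | j <;> simp [(hbas j).1, (hbas j).2, hae, haa, Finsupp.single_apply]
  exact LinearMap.congr_fun this x

theorem repr_mul_inl (hbas : ∀ i, bas (Sum.inl i) = e i ∧ bas (Sum.inr i) = a i)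
    (hea : ∀ i j, e i * a j = if i = j then a j else 0) (haa : ∀ i j, a i * a j = 0)
    (x y : Λ) (j : ZMod n) :
    bas.repr (x * y) (Sum.inl j) = bas.repr x (Sum.inl j) * bas.repr y (Sum.inl j) := by
  apply smul_arrow_injective hbas j
  change bas.repr (x * y) (Sum.inl j) • a j =
    (bas.repr x (Sum.inl j) * bas.repr y (Sum.inl j)) • a j
  rw [← mul_arrow hbas hea haa, mul_assoc, mul_arrow hbas hea haa y, mul_smul_comm,
    mul_arrow hbas hea haa x, smul_smul, mul_comm]

theorem repr_one_inl (hbas : ∀ i, bas (Sum.inl i) = e i ∧ bas (Sum.inr i) = a i)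
    (hea : ∀ i j, e i * a j = if i = j then a j else 0) (haa : ∀ i j, a i * a j = 0)
    (j : ZMod n) : bas.repr 1 (Sum.inl j) = 1 := by
  apply smul_arrow_injective hbas j
  change bas.repr 1 (Sum.inl j) • a j = (1 : K) • a j
  rw [← mul_arrow hbas hea haa, one_mul, one_smul]

theorem exists_eq_mul_succ_of_inner (hbas : ∀ i, bas (Sum.inl i) = e i ∧ bas (Sum.inr i) = a i)
    (hea : ∀ i j, e i * a j = if i = j then a j else 0)
    (hae : ∀ i j, a i * e j = if j = i + 1 then a i else 0) (haa : ∀ i j, a i * a j = 0)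
    {χ : ZMod n → K} {φ : Λ → Λ} (hφa : ∀ i, φ (a i) = χ i • a i)
    (u : Λˣ) (hu : ∀ y, φ y = u * y * ↑u⁻¹) :
    ∃ c : ZMod n → Kˣ, ∀ i, (c i : K) = χ i * c (i + 1) := by
  have hunit (j : ZMod n) : bas.repr u (Sum.inl j) * bas.repr ↑u⁻¹ (Sum.inl j) = 1 := by
    rw [← repr_mul_inl hbas hea haa, u.mul_inv, repr_one_inl hbas hea haa]
  refine ⟨fun j => ⟨_, _, hunit j, by rw [mul_comm, hunit]⟩,
    fun i => smul_arrow_injective hbas i ?_⟩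
  calc bas.repr u (Sum.inl i) • a i = u * a i := (mul_arrow hbas hea haa _ i).symm
    _ = φ (a i) * u := by rw [hu, Units.inv_mul_cancel_right]
    _ = (χ i * bas.repr u (Sum.inl (i + 1))) • a i := by
      rw [hφa, smul_mul_assoc, arrow_mul hbas hae haa, smul_smul]

variable [NeZero n]

def vertexSum (e : ZMod n → Λ) (d : ZMod n → K) : Λ := ∑ i, d i • e i

theorem vertexSum_one (hone : ∑ i, e i = 1) : vertexSum e (1 : ZMod n → K) = 1 := by
  simp [vertexSum, hone]

theorem vertex_mul_vertexSum (hee : ∀ i j, e i * e j = if i = j then e i else 0)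
    (d : ZMod n → K) (j : ZMod n) : e j * vertexSum e d = d j • e j := by
  simp [vertexSum, Finset.mul_sum, hee]

theorem vertexSum_mul_vertex (hee : ∀ i j, e i * e j = if i = j then e i else 0)
    (d : ZMod n → K) (j : ZMod n) : vertexSum e d * e j = d j • e j := by
  simp [vertexSum, Finset.sum_mul, hee]

theorem vertexSum_mul_arrow (hea : ∀ i j, e i * a j = if i = j then a j else 0)
    (d : ZMod n → K) (j : ZMod n) : vertexSum e d * a j = d j • a j := by
  simp [vertexSum, Finset.sum_mul, hea]

theorem arrow_mul_vertexSum (hae : ∀ i j, a i * e j = if j = i + 1 then a i else 0)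
    (d : ZMod n → K) (j : ZMod n) : a j * vertexSum e d = d (j + 1) • a j := by
  simp [vertexSum, Finset.mul_sum, hae]

theorem vertexSum_mul_vertexSum (hee : ∀ i j, e i * e j = if i = j then e i else 0)
    (d d' : ZMod n → K) : vertexSum e d * vertexSum e d' = vertexSum e (d * d') := by
  rw [vertexSum, Finset.sum_mul]
  simp only [smul_mul_assoc, vertex_mul_vertexSum hee, smul_smul]
  rfl

theorem exists_inner_of_eq_mul_succ (hbas : ∀ i, bas (Sum.inl i) = e i ∧ bas (Sum.inr i) = a i)
    (hee : ∀ i j, e i * e j = if i = j then e i else 0)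
    (hea : ∀ i j, e i * a j = if i = j then a j else 0)
    (hae : ∀ i j, a i * e j = if j = i + 1 then a i else 0) (hone : ∑ i, e i = 1)
    {χ : ZMod n → K} {φ : Λ ≃ₐ[K] Λ} (hφe : ∀ i, φ (e i) = e i)
    (hφa : ∀ i, φ (a i) = χ i • a i) (c : ZMod n → Kˣ)
    (hc : ∀ i, (c i : K) = χ i * c (i + 1)) :
    ∃ u : Λˣ, ∀ y, φ y = u * y * ↑u⁻¹ := by
  have hmul (d d' : ZMod n → K) (hdd' : d * d' = 1) : vertexSum e d * vertexSum e d' = 1 := by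
    rw [vertexSum_mul_vertexSum hee, hdd', vertexSum_one hone]
  let u : Λˣ := ⟨vertexSum e fun i => (c i : K), vertexSum e fun i => (↑(c i)⁻¹ : K),
    hmul _ _ (by ext; simp), hmul _ _ (by ext; simp)⟩
  refine ⟨u, fun y => ?_⟩
  have : φ.toLinearMap = LinearMap.mulLeftRight K ((u : Λ), ((u⁻¹ : Λˣ) : Λ)) := by
    refine bas.ext fun b => ?_
    rcases b with j | j
    · simp [(hbas j).1, hφe, u, vertexSum_mul_vertex hee, vertex_mul_vertexSum hee, smul_smul]
    · simp [(hbas j).2, hφa, u, vertexSum_mul_arrow hea, arrow_mul_vertexSum hae,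
        smul_smul, hc j]
  exact LinearMap.congr_fun this y

end TruncatedCyclicQuiver

open TruncatedCyclicQuiver in
theorem stmt_16_general (K : Type*) [Field K] (n : ℕ) [NeZero n]
    (Λ : Type*) [Ring Λ] [Algebra K Λ]
    (e a : ZMod n → Λ)
    (bas : Module.Basis (ZMod n ⊕ ZMod n) K Λ)
    (hbas : ∀ i, bas (Sum.inl i) = e i ∧ bas (Sum.inr i) = a i)
    (hee : ∀ i j, e i * e j = if i = j then e i else 0)
    (hea : ∀ i j, e i * a j = if i = j then a j else 0)
    (hae : ∀ i j, a i * e j = if j = i + 1 then a i else 0)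
    (haa : ∀ i j, a i * a j = 0)
    (hone : (∑ i, e i) = 1)
    (χ : ZMod n → K) (hχ : ∀ i, χ i ≠ 0)
    (φ : Λ ≃ₐ[K] Λ)
    (hφe : ∀ i, φ (e i) = e i)
    (hφa : ∀ i, φ (a i) = χ i • a i) :
    (∃ u : Λˣ, ∀ y : Λ, φ y = (u : Λ) * y * ((u⁻¹ : Λˣ) : Λ)) ↔ ∏ i, χ i = 1 := by
  have hprod : ∏ i, χ i = 1 ↔ ∏ i, Units.mk0 (χ i) (hχ i) = 1 := by simp [Units.ext_iff]
  rw [hprod, ZMod.prod_eq_one_iff_exists_eq_mul_succ]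
  constructor
  · rintro ⟨u, hu⟩
    obtain ⟨c, hc⟩ := exists_eq_mul_succ_of_inner hbas hea hae haa hφa u hu
    exact ⟨c, fun i => Units.ext (hc i)⟩
  · rintro ⟨c, hc⟩
    exact exists_inner_of_eq_mul_succ hbas hee hea hae hone hφe hφa c
      fun i => congrArg Units.val (hc i)

/-- for the truncated cyclic quiver algebra `Λ = KQ/(KQ)_{≥2}` with
vertices `e i` and arrows `a i : i → i+1`, a (graded) automorphism `φ` fixing all
vertices and mapping `a i ↦ χ i • a i` (with `χ i ∈ K*`) is inner if and only if
`∏ i, χ i = 1`. -/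
theorem stmt_16 (K : Type*) [Field K] (n : ℕ) [NeZero n] (hn : 1 ≤ n)
    (Λ : Type*) [Ring Λ] [Algebra K Λ]
    (e a : ZMod n → Λ)
    (bas : Module.Basis (ZMod n ⊕ ZMod n) K Λ)
    (hbas : ∀ i, bas (Sum.inl i) = e i ∧ bas (Sum.inr i) = a i)
    (hee : ∀ i j, e i * e j = if i = j then e i else 0)
    (hea : ∀ i j, e i * a j = if i = j then a j else 0)
    (hae : ∀ i j, a i * e j = if j = i + 1 then a i else 0)
    (haa : ∀ i j, a i * a j = 0)
    (hone : (∑ i, e i) = 1)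
    (χ : ZMod n → K) (hχ : ∀ i, χ i ≠ 0)
    (φ : Λ ≃ₐ[K] Λ)
    (hφe : ∀ i, φ (e i) = e i)
    (hφa : ∀ i, φ (a i) = χ i • a i) :
    (∃ u : Λˣ, ∀ y : Λ, φ y = (u : Λ) * y * ((u⁻¹ : Λˣ) : Λ)) ↔ ∏ i, χ i = 1 :=
  stmt_16_general K n Λ e a bas hbas hee hea hae haa hone χ hχ φ hφe hφa
end

section
/- Let n ≥ 1, char K ≠ 2, and let Λ = KQ/(KQ)_{≥2} be the truncated cyclic quiver algebra with n vertices, n odd. With μ̄ as above (μ̄(e_i)=e_{i+1}, μ̄(a_i)=-a_{i+1}) and η̄ the Nakayama automorphism given by η̄(e_i)=e_{i+1}, η̄(a_i)=a_{i+1}, the smallest k ≥ 0 such that μ̄^{k+1}η̄^{-1} is an inner automorphism of Λ is k = n. -/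
/-!
The automorphism `φ_k = μ̄^(k+1) η̄⁻¹` sends `e_i ↦ e_(i+k)` and `a_i ↦ (-1)^(k+1) a_(i+k)`, so
`φ_n` is the identity because `n` is odd. Conversely, if `φ_k` is conjugation by a unit `u` with
`k < n`, then `φ_k(x) u = u x` for all `x`. The `e`-coordinates are multiplicative (they realise
`Λ ⧸ rad Λ ≅ Kⁿ`), so for `k ≢ 0` this kills every `e`-coordinate of `u`; for `k = 0` the relation
`-a_i u = u a_i` forces `c_i = -c_(i+1)` around the odd cycle, hence `c = 0` as `char K ≠ 2`.
But all `e`-coordinates of a unit are nonzero.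
-/

open Module

theorem eq_zero_of_forall_eq_neg_add_one {R : Type*} [Ring R] [Nontrivial R] [NoZeroDivisors R]
    (hR : ringChar R ≠ 2) {n : ℕ} (hn : Odd n) {c : ZMod n → R}
    (hc : ∀ j, c j = -c (j + 1)) (j : ZMod n) : c j = 0 := by
  have hiter : ∀ m : ℕ, c j = (-1) ^ m * c (j + m) := by
    intro m
    induction m with
    | zero => simp
    | succ m ih => rw [ih, hc, pow_succ, Nat.cast_succ, add_assoc]; noncomm_ring
  have := hiter n
  rw [ZMod.natCast_self, add_zero, hn.neg_one_pow, neg_one_mul] at this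
  exact (Ring.eq_self_iff_eq_zero_of_char_ne_two hR).mp this.symm

theorem AlgEquiv.pow_apply_of_apply_eq_smul {K Λ : Type*} [CommSemiring K] [Semiring Λ]
    [Algebra K Λ] {n : ℕ} {f : Λ ≃ₐ[K] Λ} {v : ZMod n → Λ} {s : K}
    (hf : ∀ i, f (v i) = s • v (i + 1)) (m : ℕ) (i : ZMod n) :
    (f ^ m) (v i) = s ^ m • v (i + m) := by
  induction m generalizing i with
  | zero => simp
  | succ m ih =>
    rw [pow_succ, AlgEquiv.mul_apply, hf, map_smul, ih, smul_smul, pow_succ', Nat.cast_succ,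
      add_assoc, add_comm 1]

theorem AlgEquiv.pow_mul_inv_apply {K Λ : Type*} [CommSemiring K] [Semiring Λ]
    [Algebra K Λ] {n : ℕ} {μ η : Λ ≃ₐ[K] Λ} {v : ZMod n → Λ} {s : K}
    (hμ : ∀ i, μ (v i) = s • v (i + 1)) (hη : ∀ i, η (v i) = v (i + 1)) (k : ℕ) (i : ZMod n) :
    (μ ^ (k + 1) * η⁻¹) (v i) = s ^ (k + 1) • v (i + k) := by
  have hηinv : η⁻¹ (v i) = v (i - 1) := by
    rw [AlgEquiv.aut_inv, AlgEquiv.symm_apply_eq, hη, sub_add_cancel]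
  rw [AlgEquiv.mul_apply, hηinv, pow_apply_of_apply_eq_smul hμ]
  push_cast
  ring_nf

/-- `bas` is the path basis of `KQ/(KQ)_{≥2}` for the cyclic quiver with arrows
`a i : i → i + 1`, paths being written from left to right. -/
structure IsTruncatedCyclicBasis {K Λ : Type*} [CommRing K] [Ring Λ] [Algebra K Λ] {n : ℕ}
    (bas : Basis (ZMod n ⊕ ZMod n) K Λ) (e a : ZMod n → Λ) : Prop where
  basis_inl : ∀ i, bas (Sum.inl i) = e i
  basis_inr : ∀ i, bas (Sum.inr i) = a i
  e_mul_e : ∀ i j, e i * e j = if i = j then e i else 0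
  e_mul_a : ∀ i j, e i * a j = if i = j then a j else 0
  a_mul_e : ∀ i j, a i * e j = if j = i + 1 then a i else 0
  a_mul_a : ∀ i j, a i * a j = 0

namespace IsTruncatedCyclicBasis

variable {K Λ : Type*} [CommRing K] [Ring Λ] [Algebra K Λ] {n : ℕ}
  {bas : Basis (ZMod n ⊕ ZMod n) K Λ} {e a : ZMod n → Λ}

theorem repr_e (h : IsTruncatedCyclicBasis bas e a) (i : ZMod n) :
    bas.repr (e i) = Finsupp.single (Sum.inl i) 1 := by
  rw [← h.basis_inl, bas.repr_self]

theorem repr_a (h : IsTruncatedCyclicBasis bas e a) (i : ZMod n) :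
    bas.repr (a i) = Finsupp.single (Sum.inr i) 1 := by
  rw [← h.basis_inr, bas.repr_self]

variable [NeZero n]

theorem sum_repr (h : IsTruncatedCyclicBasis bas e a) (x : Λ) :
    (∑ i, bas.repr x (Sum.inl i) • e i) + ∑ i, bas.repr x (Sum.inr i) • a i = x := by
  conv_rhs => rw [← bas.sum_repr x]
  simp only [Fintype.sum_sum_type, h.basis_inl, h.basis_inr]

theorem mul_e (h : IsTruncatedCyclicBasis bas e a) (x : Λ) (j : ZMod n) :
    x * e j = bas.repr x (Sum.inl j) • e j + bas.repr x (Sum.inr (j - 1)) • a (j - 1) := by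
  conv_lhs => rw [← h.sum_repr x]
  simp only [add_mul, Finset.sum_mul, smul_mul_assoc, h.e_mul_e, h.a_mul_e, smul_ite,
    smul_zero, ← sub_eq_iff_eq_add, Finset.sum_ite_eq, Finset.sum_ite_eq', Finset.mem_univ,
    if_true]

theorem mul_a (h : IsTruncatedCyclicBasis bas e a) (x : Λ) (j : ZMod n) :
    x * a j = bas.repr x (Sum.inl j) • a j := by
  conv_lhs => rw [← h.sum_repr x]
  simp [add_mul, Finset.sum_mul, h.e_mul_a, h.a_mul_a]

theorem a_mul (h : IsTruncatedCyclicBasis bas e a) (x : Λ) (j : ZMod n) :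
    a j * x = bas.repr x (Sum.inl (j + 1)) • a j := by
  conv_lhs => rw [← h.sum_repr x]
  simp [mul_add, Finset.mul_sum, h.a_mul_e, h.a_mul_a]

theorem repr_mul_inl (h : IsTruncatedCyclicBasis bas e a) (x y : Λ) (i : ZMod n) :
    bas.repr (x * y) (Sum.inl i) = bas.repr x (Sum.inl i) * bas.repr y (Sum.inl i) := by
  conv_lhs => rw [← h.sum_repr y]
  simp [mul_add, Finset.mul_sum, h.mul_e, h.mul_a, h.repr_e, h.repr_a,
    Finsupp.single_apply, mul_comm]

theorem repr_inl_ne_zero_of_isUnit (h : IsTruncatedCyclicBasis bas e a) {u : Λ}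
    [Nontrivial K] (hu : IsUnit u) (i : ZMod n) : bas.repr u (Sum.inl i) ≠ 0 := by
  obtain ⟨v, hv⟩ := hu.exists_right_inv
  have key := h.repr_mul_inl u (v * e i) i
  rw [← mul_assoc, hv, one_mul, h.repr_e] at key
  intro h0
  simp [h0] at key

theorem repr_inl_eq_zero_of_e_add_mul_eq_mul_e (h : IsTruncatedCyclicBasis bas e a) {u : Λ}
    {k : ZMod n} (hk : k ≠ 0) (hu : ∀ j, e (j + k) * u = u * e j) (j : ZMod n) :
    bas.repr u (Sum.inl j) = 0 := by
  have key := congrArg (fun x => bas.repr x (Sum.inl j)) (hu j)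
  simpa [h.repr_mul_inl, h.repr_e, Finsupp.single_apply, hk] using key.symm

theorem repr_inl_eq_zero_of_neg_a_mul_eq_mul_a [IsDomain K] (hK : ringChar K ≠ 2) (hn : Odd n)
    (h : IsTruncatedCyclicBasis bas e a) {u : Λ} (hu : ∀ j, -(a j * u) = u * a j) (j : ZMod n) :
    bas.repr u (Sum.inl j) = 0 := by
  refine eq_zero_of_forall_eq_neg_add_one (c := fun i => bas.repr u (Sum.inl i)) hK hn
    (fun i => ?_) j
  have key := congrArg (fun x => bas.repr x (Sum.inr i)) (hu i)
  simpa [h.a_mul, h.mul_a, h.repr_a] using key.symm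

end IsTruncatedCyclicBasis

theorem stmt_17_general (K : Type*) [Field K] (n : ℕ) [NeZero n] (hnodd : Odd n)
    (hchar : ringChar K ≠ 2)
    (Λ : Type*) [Ring Λ] [Algebra K Λ]
    (e a : ZMod n → Λ)
    (bas : Module.Basis (ZMod n ⊕ ZMod n) K Λ)
    (hbas : ∀ i, bas (Sum.inl i) = e i ∧ bas (Sum.inr i) = a i)
    (hee : ∀ i j, e i * e j = if i = j then e i else 0)
    (hea : ∀ i j, e i * a j = if i = j then a j else 0)
    (hae : ∀ i j, a i * e j = if j = i + 1 then a i else 0)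
    (haa : ∀ i j, a i * a j = 0)
    (μbar ηbar : Λ ≃ₐ[K] Λ)
    (hμe : ∀ i, μbar (e i) = e (i + 1))
    (hμa : ∀ i, μbar (a i) = -(a (i + 1)))
    (hηe : ∀ i, ηbar (e i) = e (i + 1))
    (hηa : ∀ i, ηbar (a i) = a (i + 1)) :
    IsLeast {k : ℕ | ∃ u : Λˣ, ∀ y : Λ,
        (μbar ^ (k + 1) * ηbar⁻¹) y = (u : Λ) * y * ((u⁻¹ : Λˣ) : Λ)} n := by
  have h : IsTruncatedCyclicBasis bas e a :=
    ⟨fun i => (hbas i).1, fun i => (hbas i).2, hee, hea, hae, haa⟩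
  have φe := AlgEquiv.pow_mul_inv_apply (s := (1 : K)) (by simpa using hμe) hηe
  have φa := AlgEquiv.pow_mul_inv_apply (s := (-1 : K)) (by simpa using hμa) hηa
  refine ⟨⟨1, fun y => ?_⟩, fun k ⟨u, hu⟩ => ?_⟩
  · have hid : (μbar ^ (n + 1) * ηbar⁻¹).toLinearMap = LinearMap.id := bas.ext fun i => by
      rcases i with i | i <;>
        simp [h.basis_inl, h.basis_inr, φe, φa, hnodd.add_one.neg_one_pow]
    simpa using LinearMap.congr_fun hid y
  · by_contra! hlt
    have hconj : ∀ y, (μbar ^ (k + 1) * ηbar⁻¹) y * u = u * y := fun y => by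
      rw [hu, mul_assoc, Units.inv_mul, mul_one]
    refine h.repr_inl_ne_zero_of_isUnit u.isUnit 0 ?_
    rcases eq_or_ne (k : ZMod n) 0 with hk | hk
    · obtain rfl : k = 0 := Nat.eq_zero_of_dvd_of_lt ((ZMod.natCast_eq_zero_iff k n).mp hk) hlt
      refine h.repr_inl_eq_zero_of_neg_a_mul_eq_mul_a hchar hnodd (fun j => ?_) 0
      have := hconj (a j)
      rw [φa] at this
      simpa using this
    · exact h.repr_inl_eq_zero_of_e_add_mul_eq_mul_e hk
        (fun j => by simpa [φe] using hconj (e j)) 0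

/-- for the truncated cyclic quiver algebra `Λ` with `n` odd vertices over
a field of characteristic `≠ 2`, with `μ̄(e_i)=e_{i+1}`, `μ̄(a_i)=-a_{i+1}` and the
Nakayama automorphism `η̄(e_i)=e_{i+1}`, `η̄(a_i)=a_{i+1}`, the smallest `k ≥ 0` such
that `μ̄^{k+1} ∘ η̄⁻¹` is inner is `k = n`. -/
theorem stmt_17 (K : Type*) [Field K] (n : ℕ) [NeZero n] (hn : 1 ≤ n) (hnodd : Odd n)
    (hchar : ringChar K ≠ 2)
    (Λ : Type*) [Ring Λ] [Algebra K Λ]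
    (e a : ZMod n → Λ)
    (bas : Module.Basis (ZMod n ⊕ ZMod n) K Λ)
    (hbas : ∀ i, bas (Sum.inl i) = e i ∧ bas (Sum.inr i) = a i)
    (hee : ∀ i j, e i * e j = if i = j then e i else 0)
    (hea : ∀ i j, e i * a j = if i = j then a j else 0)
    (hae : ∀ i j, a i * e j = if j = i + 1 then a i else 0)
    (haa : ∀ i j, a i * a j = 0)
    (hone : (∑ i, e i) = 1)
    (μbar ηbar : Λ ≃ₐ[K] Λ)
    (hμe : ∀ i, μbar (e i) = e (i + 1))
    (hμa : ∀ i, μbar (a i) = -(a (i + 1)))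
    (hηe : ∀ i, ηbar (e i) = e (i + 1))
    (hηa : ∀ i, ηbar (a i) = a (i + 1)) :
    IsLeast {k : ℕ | ∃ u : Λˣ, ∀ y : Λ,
        (μbar ^ (k + 1) * ηbar⁻¹) y = (u : Λ) * y * ((u⁻¹ : Λˣ) : Λ)} n :=
  stmt_17_general K n hnodd hchar Λ e a bas hbas hee hea hae haa μbar ηbar hμe hμa hηe hηa
end
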